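/- arXiv:1505.01815 — 4 statements merged into one kernel-verified Lean document; each statement's English description precedes it below -/
import Mathlib

section
/- Let 0 < η < 82/5395 and let γ₁ ≥ γ₂ ≥ ⋯ ≥ γ_t > 0 be real numbers with γ₁ + ⋯ + γ_t = 1. Suppose (a) γ₁ < 199/600 + 119η/240, (b) no subset sum ∑_{j∈S} γ_j lies in the interval [2/5 + η, 3/5 − η], and (c) either γ₃ < 1/5 − 2η or γ₂ + γ₃ < 2/5 + η. Then γ₁ + γ₂ < 2/5 + η. -/
/-- Baker–Irving, Lemma 2 (first part): under the combinatorial hypotheses,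
`γ₁ + γ₂ < 2/5 + η`.  The sequence is indexed from `0`, is positive on
`{0, …, t-1}`, zero afterwards, nonincreasing, and sums to `1`. -/
theorem baker_irving_lem2_first (η : ℝ) (hη0 : 0 < η) (hη1 : η < 82 / 5395)
    (t : ℕ) (ht : 1 ≤ t) (γ : ℕ → ℝ)
    (hpos : ∀ i < t, 0 < γ i) (hzero : ∀ i, t ≤ i → γ i = 0)
    (hmono : ∀ i j, i ≤ j → γ j ≤ γ i)
    (hsum : ∑ i ∈ Finset.range t, γ i = 1)
    (ha : γ 0 < 199 / 600 + 119 * η / 240)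
    (hb : ∀ S : Finset ℕ, S ⊆ Finset.range t →
      (∑ j ∈ S, γ j) ∉ Set.Icc (2 / 5 + η) (3 / 5 - η))
    (hc : γ 2 < 1 / 5 - 2 * η ∨ γ 1 + γ 2 < 2 / 5 + η) :
    γ 0 + γ 1 < 2 / 5 + η := by
  by_contra hcon
  push_neg at hcon
  have hnn : ∀ i, 0 ≤ γ i := by
    intro i
    rcases lt_or_ge i t with h | h
    · exact (hpos i h).le
    · exact (hzero i h).ge
  -- t ≥ 2
  have ht2 : 2 ≤ t := by
    by_contra h
    push_neg at h
    interval_cases t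
    · simp [Finset.sum_range_one] at hsum
      linarith
  -- γ 0 + γ 1 > 3/5 - η
  have hS01 : ({0, 1} : Finset ℕ) ⊆ Finset.range t := by
    intro x hx
    simp only [Finset.mem_insert, Finset.mem_singleton] at hx
    simp only [Finset.mem_range]
    omega
  have hb01 := hb {0, 1} hS01
  rw [Finset.sum_pair (by norm_num)] at hb01
  simp only [Set.mem_Icc, not_and, not_le] at hb01
  have h01 : 3 / 5 - η < γ 0 + γ 1 := hb01 hcon
  have hg0 : γ 0 < 2 / 5 + η := by linarith
  -- partial sums
  set P : ℕ → ℝ := fun k => ∑ i ∈ Finset.Icc 1 k, γ i with hP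
  have Pmono : ∀ m k, m ≤ k → P m ≤ P k := by
    intro m k hmk
    apply Finset.sum_le_sum_of_subset_of_nonneg
    · exact Finset.Icc_subset_Icc_right hmk
    · intro i _ _; exact hnn i
  have hrange : Finset.range t = insert 0 (Finset.Icc 1 (t - 1)) := by
    ext x
    simp only [Finset.mem_range, Finset.mem_insert, Finset.mem_Icc]
    omega
  have hPt : P (t - 1) = 1 - γ 0 := by
    rw [hrange, Finset.sum_insert (by simp)] at hsum
    simp only [hP]
    linarith
  have hPt_ge : 2 / 5 + η ≤ P (t - 1) := by
    rw [hPt]; linarith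
  have hex : ∃ k, 2 / 5 + η ≤ P k := ⟨t - 1, hPt_ge⟩
  set k := Nat.find hex with hkdef
  have hk : 2 / 5 + η ≤ P k := Nat.find_spec hex
  have hmin : ∀ m < k, P m < 2 / 5 + η := by
    intro m hm
    have := Nat.find_min hex hm
    linarith [not_le.mp this]
  have hk_le : k ≤ t - 1 := Nat.find_le hPt_ge
  have hP1 : P 1 = γ 1 := by simp [hP]
  have hk2 : 2 ≤ k := by
    by_contra h
    push_neg at h
    have : P k ≤ P 1 := Pmono k 1 (by omega)
    have hg1 : γ 1 ≤ γ 0 := hmono 0 1 (by norm_num)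
    rw [hP1] at this
    linarith
  have hsplit : P k = P (k - 1) + γ k := by
    have h1 : k - 1 + 1 = k := by omega
    calc P k = ∑ i ∈ Finset.Icc 1 (k - 1 + 1), γ i := by rw [h1]
    _ = P (k - 1) + γ (k - 1 + 1) := Finset.sum_Icc_succ_top (by omega) γ
    _ = P (k - 1) + γ k := by rw [h1]
  have hsubk : Finset.Icc 1 k ⊆ Finset.range t := by
    intro x hx
    simp only [Finset.mem_Icc] at hx
    simp only [Finset.mem_range]
    omega
  have hbk := hb (Finset.Icc 1 k) hsubk
  simp only [Set.mem_Icc, not_and, not_le] at hbk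
  have hPk3 : 3 / 5 - η < P k := hbk hk
  have hgk : 1 / 5 - 2 * η < γ k := by
    have := hmin (k - 1) (by omega)
    linarith
  rcases hc with hc | hc
  · have : γ k ≤ γ 2 := hmono 2 k hk2
    linarith
  · -- k ≥ 3
    have hP2 : P 2 = γ 1 + γ 2 := by
      have : Finset.Icc 1 2 = {1, 2} := by decide
      simp [hP, this, Finset.sum_pair]
    have hk3 : 3 ≤ k := by
      by_contra h
      push_neg at h
      have : P k ≤ P 2 := Pmono k 2 (by omega)
      rw [hP2] at this
      linarith
    have hS0k : ({0, k} : Finset ℕ) ⊆ Finset.range t := by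
      intro x hx
      simp only [Finset.mem_insert, Finset.mem_singleton] at hx
      simp only [Finset.mem_range]
      omega
    have hb0k := hb {0, k} hS0k
    rw [Finset.sum_pair (by omega)] at hb0k
    simp only [Set.mem_Icc, not_and, not_le] at hb0k
    have hg01 : γ 1 ≤ γ 0 := hmono 0 1 (by norm_num)
    have hg12 : γ 2 ≤ γ 1 := hmono 1 2 (by norm_num)
    have hg2k : γ k ≤ γ 2 := hmono 2 k hk2
    have h0k_big : 3 / 5 - η < γ 0 + γ k := by
      apply hb0k
      linarith
    linarith
end

section
/- Let 0 < η < 82/5395 and let γ₁ ≥ γ₂ ≥ ⋯ ≥ γ_t > 0 be real numbers with γ₁ + ⋯ + γ_t = 1. Suppose (a) γ₁ < 199/600 + 119η/240, (b) no subset sum ∑_{j∈S} γ_j lies in [2/5 + η, 3/5 − η], and (c) either γ₃ < 1/5 − 2η or γ₂ + γ₃ < 2/5 + η. Then t ≥ 5, γ₅ ≥ 1/5 − 2η, and γ₁ + γ₂ + γ₆ + ⋯ + γ_t < 2/5 + η. -/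
private lemma jump_aux (F : ℕ → ℝ) (B C : ℝ) (n₀ N : ℕ) (hn : n₀ < N)
    (h₀ : F n₀ < B) (hN : ¬ F N < B)
    (hgap : ∀ k, F k < B ∨ C < F k) :
    ∃ k, n₀ ≤ k ∧ F k < B ∧ C < F (k + 1) := by
  classical
  have hex : ∃ j, ¬ F (n₀ + 1 + j) < B :=
    ⟨N - n₀ - 1, by rwa [show n₀ + 1 + (N - n₀ - 1) = N by omega]⟩
  set j := Nat.find hex with hj
  have hspec : ¬ F (n₀ + 1 + j) < B := Nat.find_spec hex
  have hC : C < F (n₀ + 1 + j) := (hgap _).resolve_left hspec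
  have hkB : F (n₀ + j) < B := by
    rcases Nat.eq_zero_or_pos j with h0 | hpos
    · rw [h0]; simpa using h₀
    · have hm := Nat.find_min hex (show j - 1 < j by omega)
      rw [not_not] at hm
      rwa [show n₀ + 1 + (j - 1) = n₀ + j by omega] at hm
  exact ⟨n₀ + j, Nat.le_add_right _ _, hkB,
    by rwa [show n₀ + j + 1 = n₀ + 1 + j by omega]⟩


/-- Baker–Irving, Lemma 2: under the combinatorial hypotheses, `t ≥ 5`,
`γ₅ ≥ 1/5 - 2η` and `γ₁ + γ₂ + γ₆ + ⋯ + γ_t < 2/5 + η`.  The sequence is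
indexed from `0`, positive on `{0, …, t-1}`, zero afterwards, nonincreasing,
and sums to `1`. -/
theorem baker_irving_lem2 (η : ℝ) (hη0 : 0 < η) (hη1 : η < 82 / 5395)
    (t : ℕ) (ht : 1 ≤ t) (γ : ℕ → ℝ)
    (hpos : ∀ i < t, 0 < γ i) (hzero : ∀ i, t ≤ i → γ i = 0)
    (hmono : ∀ i j, i ≤ j → γ j ≤ γ i)
    (hsum : ∑ i ∈ Finset.range t, γ i = 1)
    (ha : γ 0 < 199 / 600 + 119 * η / 240)
    (hb : ∀ S : Finset ℕ, S ⊆ Finset.range t →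
      (∑ j ∈ S, γ j) ∉ Set.Icc (2 / 5 + η) (3 / 5 - η))
    (hc : γ 2 < 1 / 5 - 2 * η ∨ γ 1 + γ 2 < 2 / 5 + η) :
    5 ≤ t ∧ 1 / 5 - 2 * η ≤ γ 4 ∧
      γ 0 + γ 1 + ∑ i ∈ Finset.Ico 5 t, γ i < 2 / 5 + η := by
  classical
  -- gap dichotomy
  have hgap' : ∀ S : Finset ℕ, S ⊆ Finset.range t →
      (∑ j ∈ S, γ j) < 2 / 5 + η ∨ 3 / 5 - η < ∑ j ∈ S, γ j := by
    intro S hS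
    have h := hb S hS
    rw [Set.mem_Icc] at h
    push_neg at h
    rcases lt_or_ge (∑ j ∈ S, γ j) (2 / 5 + η) with h' | h'
    · exact Or.inl h'
    · exact Or.inr (h h')
  -- t ≥ 2
  have ht2 : 2 ≤ t := by
    by_contra h
    have h1 : t = 1 := by omega
    subst h1
    rw [Finset.sum_range_one] at hsum
    linarith
  -- truncation: sums of γ over Ico 2 k are sums over subsets of range t
  have htrunc : ∀ k, ∑ i ∈ Finset.Ico 2 k, γ i = ∑ i ∈ Finset.Ico 2 (min k t), γ i := by
    intro k
    rcases le_total k t with h | h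
    · rw [min_eq_left h]
    · rw [min_eq_right h, ← Finset.sum_Ico_consecutive γ ht2 h]
      have : ∑ i ∈ Finset.Ico t k, γ i = 0 :=
        Finset.sum_eq_zero fun i hi => hzero i (Finset.mem_Ico.mp hi).1
      rw [this, add_zero]
  have htot : ∑ i ∈ Finset.Ico 2 t, γ i = 1 - γ 0 - γ 1 := by
    rw [Finset.range_eq_Ico, ← Finset.sum_Ico_consecutive γ (Nat.zero_le 2) ht2] at hsum
    have h2 : ∑ i ∈ Finset.Ico 0 2, γ i = γ 0 + γ 1 := by
      rw [← Finset.range_eq_Ico]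
      simp [Finset.sum_range_succ]
    rw [h2] at hsum
    linarith
  have hIsub : ∀ k, Finset.Ico 2 (min k t) ⊆ Finset.range t := by
    intro k x hx
    simp only [Finset.mem_Ico, Finset.mem_range] at hx ⊢
    omega
  -- First jump: γ 2 > 1/5 - 2η
  have hγ2 : 1 / 5 - 2 * η < γ 2 := by
    set F : ℕ → ℝ := fun k => γ 0 + ∑ i ∈ Finset.Ico 2 k, γ i with hF
    have hgapF : ∀ k, F k < 2 / 5 + η ∨ 3 / 5 - η < F k := by
      intro k
      have hFk : F k = ∑ j ∈ insert 0 (Finset.Ico 2 (min k t)), γ j := by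
        rw [Finset.sum_insert (by simp), hF]
        simp [htrunc k]
      have hsub : insert 0 (Finset.Ico 2 (min k t)) ⊆ Finset.range t := by
        intro x hx
        simp only [Finset.mem_insert, Finset.mem_Ico, Finset.mem_range] at hx ⊢
        omega
      rw [hFk]
      exact hgap' _ hsub
    have h₀ : F 2 < 2 / 5 + η := by
      simp only [hF, Finset.Ico_self, Finset.sum_empty, add_zero]
      linarith
    have hN : ¬ F (t + 2) < 2 / 5 + η := by
      have : F (t + 2) = 1 - γ 1 := by
        simp only [hF, htrunc (t + 2), min_eq_right (by omega : t ≤ t + 2), htot]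
        ring
      rw [this]
      have hγ10 : γ 1 ≤ γ 0 := hmono 0 1 (by omega)
      linarith
    obtain ⟨k, hk2, hkB, hkC⟩ := jump_aux F (2 / 5 + η) (3 / 5 - η) 2 (t + 2)
      (by omega) h₀ hN hgapF
    have hinc : F (k + 1) = F k + γ k := by
      simp only [hF]
      rw [Finset.sum_Ico_succ_top hk2]
      ring
    have hγk : 1 / 5 - 2 * η < γ k := by rw [hinc] at hkC; linarith
    exact lt_of_lt_of_le hγk (hmono 2 k hk2)
  -- (c) reduces to γ 1 + γ 2 < 2/5 + η
  have hc12 : γ 1 + γ 2 < 2 / 5 + η := hc.resolve_left (by linarith)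
  -- γ 0 + γ 1 < 2/5 + η
  have hs2 : γ 0 + γ 1 < 2 / 5 + η := by
    have h1 : γ 0 + γ 1 < 3 / 5 - η := by linarith
    have hsub : ({0, 1} : Finset ℕ) ⊆ Finset.range t := by
      intro x hx
      simp only [Finset.mem_insert, Finset.mem_singleton, Finset.mem_range] at hx ⊢
      omega
    have hsumS : ∑ j ∈ ({0, 1} : Finset ℕ), γ j = γ 0 + γ 1 := by
      rw [Finset.sum_pair (by norm_num)]
    rcases hgap' _ hsub with h | h
    · rwa [hsumS] at h
    · rw [hsumS] at h; linarith
  -- Second jump: γ 4 > 1/5 - 2η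
  have hγ4 : 1 / 5 - 2 * η < γ 4 := by
    set G : ℕ → ℝ := fun k => ∑ i ∈ Finset.Ico 2 k, γ i with hG
    have hgapG : ∀ k, G k < 2 / 5 + η ∨ 3 / 5 - η < G k := by
      intro k
      have hGk : G k = ∑ j ∈ Finset.Ico 2 (min k t), γ j := htrunc k
      rw [hGk]
      exact hgap' _ (hIsub k)
    have h₀ : G 4 < 2 / 5 + η := by
      have h24 : (Finset.Ico 2 4 : Finset ℕ) = {2, 3} := by decide
      have : G 4 = γ 2 + γ 3 := by
        simp only [hG, h24]
        rw [Finset.sum_insert (by decide), Finset.sum_singleton]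
      rw [this]
      have h31 : γ 3 ≤ γ 1 := hmono 1 3 (by omega)
      linarith
    have hN : ¬ G (t + 4) < 2 / 5 + η := by
      have : G (t + 4) = 1 - γ 0 - γ 1 := by
        simp only [hG, htrunc (t + 4), min_eq_right (by omega : t ≤ t + 4), htot]
      rw [this]
      linarith
    obtain ⟨k, hk4, hkB, hkC⟩ := jump_aux G (2 / 5 + η) (3 / 5 - η) 4 (t + 4)
      (by omega) h₀ hN hgapG
    have hinc : G (k + 1) = G k + γ k := by
      simp only [hG]
      rw [Finset.sum_Ico_succ_top (by omega : 2 ≤ k)]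
    have hγk : 1 / 5 - 2 * η < γ k := by rw [hinc] at hkC; linarith
    exact lt_of_lt_of_le hγk (hmono 4 k hk4)
  -- t ≥ 5
  have ht5 : 5 ≤ t := by
    by_contra h
    have : γ 4 = 0 := hzero 4 (by omega)
    linarith
  refine ⟨ht5, le_of_lt hγ4, ?_⟩
  -- final bound
  have hγ3 : 1 / 5 - 2 * η < γ 3 := lt_of_lt_of_le hγ4 (hmono 3 4 (by omega))
  have hsplit : γ 0 + γ 1 + γ 2 + γ 3 + γ 4 + ∑ i ∈ Finset.Ico 5 t, γ i = 1 := by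
    rw [Finset.range_eq_Ico, ← Finset.sum_Ico_consecutive γ (Nat.zero_le 5) ht5] at hsum
    have h5 : ∑ i ∈ Finset.Ico 0 5, γ i = γ 0 + γ 1 + γ 2 + γ 3 + γ 4 := by
      rw [← Finset.range_eq_Ico]
      simp [Finset.sum_range_succ]
    rw [h5] at hsum
    linarith
  have hYsub : ({2, 3, 4} : Finset ℕ) ⊆ Finset.range t := by
    intro x hx
    simp only [Finset.mem_insert, Finset.mem_singleton, Finset.mem_range] at hx ⊢
    omega
  have hYsum : ∑ j ∈ ({2, 3, 4} : Finset ℕ), γ j = γ 2 + γ 3 + γ 4 := by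
    rw [Finset.sum_insert (by decide), Finset.sum_insert (by decide),
      Finset.sum_singleton]
    ring
  have hY : 3 / 5 - η < γ 2 + γ 3 + γ 4 := by
    rcases hgap' _ hYsub with h | h
    · rw [hYsum] at h; linarith
    · rwa [hYsum] at h
  linarith
end

section
/- Let 0 < η < 82/5395 and let γ₁ ≥ ⋯ ≥ γ_t > 0 sum to 1, satisfying: γ₁ < 199/600 + 119η/240, no subset sum lies in [2/5+η, 3/5−η], and either γ₃ < 1/5−2η or γ₂+γ₃ < 2/5+η. Then the number of indices m with γ_m ≥ 1/5 − 2η is exactly 5. -/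
open Classical in
/-- Jump lemma: if a subset sum starts below the gap and completing it with the
tail `[k, t)` exceeds the gap, then `γ k` is big. -/
lemma baker_irving_jump (η : ℝ) (hη : η < 1/10) (t k : ℕ) (γ : ℕ → ℝ)
    (hmono : ∀ i j, i ≤ j → γ j ≤ γ i)
    (hb : ∀ S : Finset ℕ, S ⊆ Finset.range t →
      (∑ j ∈ S, γ j) ∉ Set.Icc (2 / 5 + η) (3 / 5 - η))
    (S₀ : Finset ℕ) (hS₀k : S₀ ⊆ Finset.range k) (hS₀t : S₀ ⊆ Finset.range t)
    (h1 : ∑ j ∈ S₀, γ j < 2/5 + η)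
    (h2 : 3/5 - η < (∑ j ∈ S₀, γ j) + ∑ i ∈ Finset.Ico k t, γ i) :
    1/5 - 2*η ≤ γ k := by
  set g : ℕ → ℝ := fun n => (∑ j ∈ S₀, γ j) + ∑ i ∈ Finset.Ico k n, γ i with hg
  have hgt : 2/5 + η ≤ g t := by
    have : 3/5 - η < g t := h2
    linarith
  have hex : ∃ n, 2/5 + η ≤ g n := ⟨t, hgt⟩
  have hn : 2/5 + η ≤ g (Nat.find hex) := Nat.find_spec hex
  have hnmin : ∀ m < Nat.find hex, g m < 2/5 + η := by
    intro m hm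
    exact lt_of_not_ge (Nat.find_min hex hm)
  have hkn : k < Nat.find hex := by
    by_contra h
    push_neg at h
    have he : Finset.Ico k (Nat.find hex) = ∅ := Finset.Ico_eq_empty (by omega)
    have : g (Nat.find hex) = ∑ j ∈ S₀, γ j := by simp [hg, he]
    linarith
  have hnt : Nat.find hex ≤ t := by
    by_contra h
    push_neg at h
    have := hnmin t h
    linarith
  obtain ⟨m, hm⟩ : ∃ m, Nat.find hex = m + 1 := ⟨Nat.find hex - 1, by omega⟩
  rw [hm] at hn hnmin hkn hnt
  have hkm : k ≤ m := by omega
  have hgm : g m < 2/5 + η := hnmin m (Nat.lt_succ_self m)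
  have hdisj : Disjoint S₀ (Finset.Ico k (m+1)) := by
    rw [Finset.disjoint_left]
    intro x hx hx'
    have := hS₀k hx
    simp [Finset.mem_range] at this
    simp [Finset.mem_Ico] at hx'
    omega
  have hsub : S₀ ∪ Finset.Ico k (m+1) ⊆ Finset.range t := by
    apply Finset.union_subset hS₀t
    intro x hx
    simp [Finset.mem_Ico] at hx
    simp [Finset.mem_range]
    omega
  have hgval : g (m+1) = ∑ j ∈ S₀ ∪ Finset.Ico k (m+1), γ j :=
    (Finset.sum_union hdisj).symm
  have hnot := hb _ hsub
  rw [← hgval, Set.mem_Icc] at hnot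
  have hgbig : 3/5 - η < g (m+1) := by
    rcases lt_or_ge (3/5 - η) (g (m+1)) with h | h
    · exact h
    · exact absurd ⟨hn, h⟩ hnot
  have e1 : g m = (∑ j ∈ S₀, γ j) + ∑ i ∈ Finset.Ico k m, γ i := rfl
  have e2 : g (m+1) = (∑ j ∈ S₀, γ j) + ∑ i ∈ Finset.Ico k (m+1), γ i := rfl
  rw [e1] at hgm
  rw [e2] at hgbig
  have hstep' : ∑ i ∈ Finset.Ico k (m+1), γ i
      = (∑ i ∈ Finset.Ico k m, γ i) + γ m := Finset.sum_Ico_succ_top hkm γ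
  rw [hstep'] at hgbig
  have := hmono k m hkm
  linarith

open Classical in
/-- Baker–Irving, Lemma 2 (middle step): the number of indices `m` with
`γ_m ≥ 1/5 - 2η` is exactly `5`. -/
theorem baker_irving_lem2_count (η : ℝ) (hη0 : 0 < η) (hη1 : η < 82 / 5395)
    (t : ℕ) (ht : 1 ≤ t) (γ : ℕ → ℝ)
    (hpos : ∀ i < t, 0 < γ i) (hzero : ∀ i, t ≤ i → γ i = 0)
    (hmono : ∀ i j, i ≤ j → γ j ≤ γ i)
    (hsum : ∑ i ∈ Finset.range t, γ i = 1)
    (ha : γ 0 < 199 / 600 + 119 * η / 240)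
    (hb : ∀ S : Finset ℕ, S ⊆ Finset.range t →
      (∑ j ∈ S, γ j) ∉ Set.Icc (2 / 5 + η) (3 / 5 - η))
    (hc : γ 2 < 1 / 5 - 2 * η ∨ γ 1 + γ 2 < 2 / 5 + η) :
    ((Finset.range t).filter (fun m => 1 / 5 - 2 * η ≤ γ m)).card = 5 := by
  have hη10 : η < 1/10 := by linarith
  have hε : (0:ℝ) < 1/5 - 2*η := by linarith
  -- indices with big γ lie below t
  have hT : ∀ k, 1/5 - 2*η ≤ γ k → k < t := by
    intro k hk
    by_contra h
    push_neg at h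
    rw [hzero k h] at hk
    linarith
  have hIco : ∀ k, k ≤ t → ∑ i ∈ Finset.Ico k t, γ i
      = 1 - ∑ i ∈ Finset.range k, γ i := by
    intro k hk
    rw [Finset.sum_Ico_eq_sub _ hk, hsum]
  have hγ0 : γ 0 < 2/5 + η := by linarith
  -- γ 1 is big
  have h1big : 1/5 - 2*η ≤ γ 1 := by
    apply baker_irving_jump η hη10 t 1 γ hmono hb {0}
    · simp
    · simpa using (by omega : 0 < t)
    · simpa using hγ0
    · rw [hIco 1 ht]
      simp [Finset.sum_range_succ]
      linarith
  have ht2 : 2 ≤ t := hT 1 h1big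
  -- γ 2 is big
  have h2big : 1/5 - 2*η ≤ γ 2 := by
    apply baker_irving_jump η hη10 t 2 γ hmono hb {1}
    · simp
    · simpa using (by omega : 1 < t)
    · have := hmono 0 1 (by omega)
      simpa using by linarith
    · rw [hIco 2 ht2]
      simp [Finset.sum_range_succ]
      linarith
  have ht3 : 3 ≤ t := hT 2 h2big
  -- from hypothesis (c): γ 1 + γ 2 < 2/5 + η
  have h12 : γ 1 + γ 2 < 2/5 + η := by
    rcases hc with h | h
    · linarith
    · exact h
  -- γ 3 is big
  have h3big : 1/5 - 2*η ≤ γ 3 := by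
    apply baker_irving_jump η hη10 t 3 γ hmono hb {1, 2}
    · intro x hx; simp at hx; simp; omega
    · intro x hx; simp at hx; simp; omega
    · simpa [Finset.sum_pair] using h12
    · rw [hIco 3 ht3]
      simp [Finset.sum_range_succ, Finset.sum_pair]
      linarith
  have ht4 : 4 ≤ t := hT 3 h3big
  -- γ 4 is big
  have h4big : 1/5 - 2*η ≤ γ 4 := by
    rcases lt_or_ge (γ 0 + γ 1) (2/5 + η) with h01 | h01
    · -- use S₀ = {2, 3}
      apply baker_irving_jump η hη10 t 4 γ hmono hb {2, 3}
      · intro x hx; simp at hx; simp; omega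
      · intro x hx; simp at hx; simp; omega
      · have h20 := hmono 0 2 (by omega)
        have h31 := hmono 1 3 (by omega)
        simpa [Finset.sum_pair] using by linarith
      · rw [hIco 4 ht4]
        simp [Finset.sum_range_succ, Finset.sum_pair]
        linarith
    · -- γ0 + γ1 above the gap
      have h01' : 3/5 - η < γ 0 + γ 1 := by
        have hnot := hb {0, 1} (by intro x hx; simp at hx; simp; omega)
        have hs : ∑ j ∈ ({0, 1} : Finset ℕ), γ j = γ 0 + γ 1 := by
          norm_num [Finset.sum_pair]
        rw [hs, Set.mem_Icc] at hnot
        rcases lt_or_ge (3/5 - η) (γ 0 + γ 1) with h | h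
        · exact h
        · exact absurd ⟨by linarith, h⟩ hnot
      have h02 : γ 0 + γ 2 < 2/5 + η := by
        have hnot := hb {0, 2} (by intro x hx; simp at hx; simp; omega)
        have hs : ∑ j ∈ ({0, 2} : Finset ℕ), γ j = γ 0 + γ 2 := by
          norm_num [Finset.sum_pair]
        rw [hs, Set.mem_Icc] at hnot
        rcases lt_or_ge (γ 0 + γ 2) (2/5 + η) with h | h
        · exact h
        · have h3' : 3/5 - η < γ 0 + γ 2 := by
            rcases lt_or_ge (3/5 - η) (γ 0 + γ 2) with h' | h'
            · exact h'
            · exact absurd ⟨h, h'⟩ hnot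
          -- derive contradiction
          linarith
      apply baker_irving_jump η hη10 t 4 γ hmono hb {0, 2}
      · intro x hx; simp at hx; simp; omega
      · intro x hx; simp at hx; simp; omega
      · simpa [Finset.sum_pair] using h02
      · rw [hIco 4 ht4]
        have h32 := hmono 2 3 (by omega)
        simp [Finset.sum_range_succ, Finset.sum_pair]
        linarith
  have ht5 : 5 ≤ t := hT 4 h4big
  set F := (Finset.range t).filter (fun m => 1 / 5 - 2 * η ≤ γ m) with hF
  have hsubF : ({0, 1, 2, 3, 4} : Finset ℕ) ⊆ F := by
    intro x hx
    simp at hx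
    have hxle : x ≤ 4 := by omega
    have := hmono x 4 hxle
    simp [hF, Finset.mem_filter, Finset.mem_range]
    constructor
    · omega
    · linarith
  have hcard5 : 5 ≤ F.card := by
    calc 5 = ({0, 1, 2, 3, 4} : Finset ℕ).card := by decide
    _ ≤ F.card := Finset.card_le_card hsubF
  have hcardle : F.card ≤ 5 := by
    by_contra h
    push_neg at h
    have h6 : 6 ≤ F.card := h
    have hsumF : (F.card : ℝ) * (1/5 - 2*η) ≤ ∑ i ∈ F, γ i := by
      have := Finset.card_nsmul_le_sum F γ (1/5 - 2*η)
        (fun x hx => (Finset.mem_filter.mp hx).2)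
      simpa [nsmul_eq_mul] using this
    have hsumle : ∑ i ∈ F, γ i ≤ 1 := by
      rw [← hsum]
      apply Finset.sum_le_sum_of_subset_of_nonneg (Finset.filter_subset _ _)
      intro i hi _
      exact le_of_lt (hpos i (Finset.mem_range.mp hi))
    have h6' : (6:ℝ) ≤ (F.card : ℝ) := by exact_mod_cast h6
    nlinarith
  omega
end

section
/- Suppose 0 < η < 82/5395, 1/5 − 2η ≤ α₂ < α₁ < 2/5 + η, and α₂ ≤ 1/3. Suppose α₁ = β₁ + ⋯ + β_r, α₂ = β_{r+1} + ⋯ + β_s, and 1 − α₁ − α₂ = β_{s+1} + ⋯ + β_t with all β_i > 0, and let γ₁ ≥ ⋯ ≥ γ_t be the reordering of β₁,…,β_t in decreasing order. Assume (a) γ₁ < 199/600 + 119η/240, (b) no subset sum ∑_{j∈S}γ_j lies in [2/5+η, 3/5−η], and (c) either γ₃ < 1/5−2η or γ₂+γ₃ < 2/5+η. Then either α₁ + α₂ < 2/5 + η, or both α₁ + α₂ > 3/5 − η and α₂ < 1/5 + 4η/3. -/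
lemma exists_finset_map_eq {α : Type*} [DecidableEq α] (g : ℕ → α) (s : Finset ℕ) :
    ∀ m : Multiset α, m ≤ s.val.map g → ∃ v ⊆ s, v.val.map g = m := by
  classical
  induction s using Finset.induction_on with
  | empty =>
    intro m hm
    simp only [Finset.empty_val, Multiset.map_zero, Multiset.le_zero] at hm
    exact ⟨∅, by simp, by simp [hm]⟩
  | @insert a s ha ih =>
    intro m hm
    rw [Finset.insert_val, Multiset.ndinsert_of_notMem (by simpa using ha),
      Multiset.map_cons] at hm
    by_cases hga : g a ∈ m
    · have h1 : m.erase (g a) ≤ s.val.map g := by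
        have := Multiset.erase_le_erase (g a) hm
        rwa [Multiset.erase_cons_head] at this
      obtain ⟨v, hv, hveq⟩ := ih _ h1
      refine ⟨insert a v, Finset.insert_subset_insert _ hv, ?_⟩
      have hav : a ∉ v := fun h => ha (hv h)
      rw [Finset.insert_val, Multiset.ndinsert_of_notMem (by simpa using hav),
        Multiset.map_cons, hveq, Multiset.cons_erase hga]
    · have h1 : m ≤ s.val.map g := by
        rw [Multiset.le_iff_count] at hm ⊢
        intro b
        have hb := hm b
        rcases eq_or_ne b (g a) with rfl | hbne
        · simp [Multiset.count_eq_zero_of_notMem hga]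
        · rwa [Multiset.count_cons_of_ne hbne] at hb
      obtain ⟨v, hv, hveq⟩ := ih _ h1
      exact ⟨v, hv.trans (Finset.subset_insert _ _), hveq⟩

set_option maxHeartbeats 1600000 in
/-- Baker–Irving, Lemma 3: the splitting-up lemma.  `β` is a positive sequence
whose first `r` terms sum to `α₁`, next `s - r` terms sum to `α₂`, and the
remaining `t - s` terms sum to `1 - α₁ - α₂`; `γ` is the nonincreasing
rearrangement of `β`. -/
theorem baker_irving_lem3 (η : ℝ) (hη0 : 0 < η) (hη1 : η < 82 / 5395)
    (α₁ α₂ : ℝ) (hα1 : 1 / 5 - 2 * η ≤ α₂) (hα2 : α₂ < α₁)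
    (hα3 : α₁ < 2 / 5 + η) (hα4 : α₂ ≤ 1 / 3)
    (r s t : ℕ) (hrs : r < s) (hst : s < t)
    (β : ℕ → ℝ) (hβpos : ∀ i < t, 0 < β i)
    (hβ1 : ∑ i ∈ Finset.range r, β i = α₁)
    (hβ2 : ∑ i ∈ Finset.Ico r s, β i = α₂)
    (hβ3 : ∑ i ∈ Finset.Ico s t, β i = 1 - α₁ - α₂)
    (γ : ℕ → ℝ)
    (hγmono : ∀ i j, i ≤ j → j < t → γ j ≤ γ i)
    (hperm : Multiset.map γ (Finset.range t).val =
      Multiset.map β (Finset.range t).val)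
    (ha : γ 0 < 199 / 600 + 119 * η / 240)
    (hb : ∀ S : Finset ℕ, S ⊆ Finset.range t →
      (∑ j ∈ S, γ j) ∉ Set.Icc (2 / 5 + η) (3 / 5 - η))
    (hc : γ 2 < 1 / 5 - 2 * η ∨ γ 1 + γ 2 < 2 / 5 + η) :
    α₁ + α₂ < 2 / 5 + η ∨
      (3 / 5 - η < α₁ + α₂ ∧ α₂ < 1 / 5 + 4 * η / 3) := by
  classical
  -- subset sums of β avoid the forbidden interval
  have hsubβ : ∀ S : Finset ℕ, S ⊆ Finset.range t →
      (∑ i ∈ S, β i) ∉ Set.Icc (2 / 5 + η) (3 / 5 - η) := by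
    intro S hS
    have hle : S.val.map β ≤ (Finset.range t).val.map β :=
      Multiset.map_le_map (Finset.val_le_iff.mpr hS)
    rw [← hperm] at hle
    obtain ⟨v, hv, hveq⟩ := exists_finset_map_eq γ _ _ hle
    have hsum : ∑ i ∈ v, γ i = ∑ i ∈ S, β i := by
      show (v.val.map γ).sum = (S.val.map β).sum
      rw [hveq]
    rw [← hsum]
    exact hb v hv
  -- a subset sum which is < 3/5 - η is < 2/5 + η
  have hescape : ∀ S : Finset ℕ, S ⊆ Finset.range t →
      (∑ i ∈ S, β i) < 3 / 5 - η → (∑ i ∈ S, β i) < 2 / 5 + η := by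
    intro S hS hlt
    rcases lt_or_ge (∑ i ∈ S, β i) (2 / 5 + η) with h | h
    · exact h
    · exact absurd (Set.mem_Icc.mpr ⟨h, hlt.le⟩) (hsubβ S hS)
  -- a subset sum which is > 2/5 + η is > 3/5 - η
  have hescape' : ∀ S : Finset ℕ, S ⊆ Finset.range t →
      2 / 5 + η ≤ (∑ i ∈ S, β i) → 3 / 5 - η < (∑ i ∈ S, β i) := by
    intro S hS hlt
    rcases lt_or_ge (3 / 5 - η) (∑ i ∈ S, β i) with h | h
    · exact h
    · exact absurd (Set.mem_Icc.mpr ⟨hlt, h⟩) (hsubβ S hS)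
  -- basic subsets and disjointness
  have hT1t : Finset.range r ⊆ Finset.range t := by
    intro i hi; simp only [Finset.mem_range] at hi ⊢; omega
  have hT2t : Finset.Ico r s ⊆ Finset.range t := by
    intro i hi; simp only [Finset.mem_Ico, Finset.mem_range] at hi ⊢; omega
  have hT3t : Finset.Ico s t ⊆ Finset.range t := by
    intro i hi; simp only [Finset.mem_Ico, Finset.mem_range] at hi ⊢; omega
  have hTst : Finset.range s ⊆ Finset.range t := by
    intro i hi; simp only [Finset.mem_range] at hi ⊢; omega
  have hTrtt : Finset.Ico r t ⊆ Finset.range t := by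
    intro i hi; simp only [Finset.mem_Ico, Finset.mem_range] at hi ⊢; omega
  have hd12 : Disjoint (Finset.range r) (Finset.Ico r s) := by
    rw [Finset.disjoint_left]; intro i hi1 hi2
    simp only [Finset.mem_range, Finset.mem_Ico] at hi1 hi2; omega
  have hd13 : Disjoint (Finset.range r) (Finset.Ico s t) := by
    rw [Finset.disjoint_left]; intro i hi1 hi2
    simp only [Finset.mem_range, Finset.mem_Ico] at hi1 hi2; omega
  have hd23 : Disjoint (Finset.Ico r s) (Finset.Ico s t) := by
    rw [Finset.disjoint_left]; intro i hi1 hi2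
    simp only [Finset.mem_Ico] at hi1 hi2; omega
  -- block sum decompositions
  have hsum_rs : ∑ i ∈ Finset.range s, β i = α₁ + α₂ := by
    rw [Finset.range_eq_Ico, ← Finset.sum_Ico_consecutive β (Nat.zero_le r) hrs.le,
      ← Finset.range_eq_Ico, hβ1, hβ2]
  have hsum_rt : ∑ i ∈ Finset.Ico r t, β i = 1 - α₁ := by
    rw [← Finset.sum_Ico_consecutive β hrs.le hst.le, hβ2, hβ3]; ring
  -- first dichotomy
  rcases lt_or_ge (α₁ + α₂) (2 / 5 + η) with hcase | hcase
  · exact Or.inl hcase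
  have h12B : 3 / 5 - η < α₁ + α₂ := by
    have := hescape' (Finset.range s) hTst (by rw [hsum_rs]; exact hcase)
    rwa [hsum_rs] at this
  refine Or.inr ⟨h12B, ?_⟩
  -- closure under adding small elements
  have hclosure : ∀ V : Finset ℕ, V ⊆ Finset.range t →
      (∀ i ∈ V, β i ≤ 1 / 5 - 2 * η) →
      ∀ S : Finset ℕ, S ⊆ Finset.range t → Disjoint S V →
      (∑ i ∈ S, β i) < 2 / 5 + η → (∑ i ∈ S ∪ V, β i) < 2 / 5 + η := by
    intro V
    induction V using Finset.induction_on with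
    | empty => intro _ _ S hS _ h; simpa using h
    | @insert a V ha' ih =>
      intro hVt hVsmall S hS hdisj hSA
      have hV' : V ⊆ Finset.range t := (Finset.subset_insert a V).trans hVt
      have h1 : ∑ i ∈ S ∪ V, β i < 2 / 5 + η :=
        ih hV' (fun i hi => hVsmall i (Finset.mem_insert_of_mem hi)) S hS
          (hdisj.mono_right (Finset.subset_insert a V |> Finset.le_iff_subset.mpr)) hSA
      have haSV : a ∉ S ∪ V := by
        simp only [Finset.mem_union]
        rintro (h | h)
        · exact (Finset.disjoint_left.mp hdisj h) (Finset.mem_insert_self a V)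
        · exact ha' h
      have hsumeq : ∑ i ∈ S ∪ insert a V, β i = β a + ∑ i ∈ S ∪ V, β i := by
        rw [Finset.union_insert, Finset.sum_insert haSV]
      have hlt : ∑ i ∈ S ∪ insert a V, β i < 3 / 5 - η := by
        have := hVsmall a (Finset.mem_insert_self a V)
        rw [hsumeq]; linarith
      exact hescape _ (Finset.union_subset hS hVt) hlt
  -- the large-element sets
  set Q₁ := (Finset.range r).filter (fun i => 1 / 5 - 2 * η < β i) with hQ₁def
  set Q₂ := (Finset.Ico r s).filter (fun i => 1 / 5 - 2 * η < β i) with hQ₂def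
  set Q₃ := (Finset.Ico s t).filter (fun i => 1 / 5 - 2 * η < β i) with hQ₃def
  have hQ₁T : Q₁ ⊆ Finset.range r := Finset.filter_subset _ _
  have hQ₂T : Q₂ ⊆ Finset.Ico r s := Finset.filter_subset _ _
  have hQ₃T : Q₃ ⊆ Finset.Ico s t := Finset.filter_subset _ _
  have hL₁le : ∑ i ∈ Q₁, β i ≤ α₁ := by
    rw [← hβ1]
    refine Finset.sum_le_sum_of_subset_of_nonneg hQ₁T fun i hi _ => ?_
    exact (hβpos i (Finset.mem_range.mp (hT1t hi))).le
  have hL₂le : ∑ i ∈ Q₂, β i ≤ α₂ := by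
    rw [← hβ2]
    refine Finset.sum_le_sum_of_subset_of_nonneg hQ₂T fun i hi _ => ?_
    exact (hβpos i (Finset.mem_range.mp (hT2t hi))).le
  have hL₃le : ∑ i ∈ Q₃, β i ≤ 1 - α₁ - α₂ := by
    rw [← hβ3]
    refine Finset.sum_le_sum_of_subset_of_nonneg hQ₃T fun i hi _ => ?_
    exact (hβpos i (Finset.mem_range.mp (hT3t hi))).le
  -- key inequality 1 : L₁ + L₂ > 3/5 - η
  have key1 : 3 / 5 - η < ∑ i ∈ Q₁, β i + ∑ i ∈ Q₂, β i := by
    set V := (Finset.range s).filter (fun i => ¬ (1 / 5 - 2 * η < β i)) with hVdef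
    have hVt : V ⊆ Finset.range t := (Finset.filter_subset _ _).trans hTst
    have hVsmall : ∀ i ∈ V, β i ≤ 1 / 5 - 2 * η := fun i hi =>
      le_of_not_gt (Finset.mem_filter.mp hi).2
    have hdisj : Disjoint (Finset.Ico s t) V := by
      refine Finset.disjoint_left.mpr fun i hi1 hi2 => ?_
      have := (Finset.filter_subset _ _) hi2
      simp only [Finset.mem_Ico, Finset.mem_range] at hi1 this; omega
    have h := hclosure V hVt hVsmall (Finset.Ico s t) hT3t hdisj
      (by rw [hβ3]; linarith)
    have hsplit : (Finset.range s).filter (fun i => 1 / 5 - 2 * η < β i) = Q₁ ∪ Q₂ := by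
      rw [hQ₁def, hQ₂def, ← Finset.filter_union, Finset.range_eq_Ico r,
        Finset.Ico_union_Ico_eq_Ico (Nat.zero_le r) hrs.le, ← Finset.range_eq_Ico]
    have hVsum : ∑ i ∈ V, β i = (α₁ + α₂) - (∑ i ∈ Q₁, β i + ∑ i ∈ Q₂, β i) := by
      have h1 := Finset.sum_filter_add_sum_filter_not (Finset.range s)
        (fun i => 1 / 5 - 2 * η < β i) β
      rw [hsplit, Finset.sum_union (Finset.disjoint_filter_filter hd12), hsum_rs] at h1
      rw [hVdef]; linarith
    rw [Finset.sum_union hdisj, hβ3, hVsum] at h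
    linarith
  -- key inequality 2 : L₂ + L₃ > 3/5 - η
  have key2 : 3 / 5 - η < ∑ i ∈ Q₂, β i + ∑ i ∈ Q₃, β i := by
    set V := (Finset.Ico r t).filter (fun i => ¬ (1 / 5 - 2 * η < β i)) with hVdef
    have hVt : V ⊆ Finset.range t := (Finset.filter_subset _ _).trans hTrtt
    have hVsmall : ∀ i ∈ V, β i ≤ 1 / 5 - 2 * η := fun i hi =>
      le_of_not_gt (Finset.mem_filter.mp hi).2
    have hdisj : Disjoint (Finset.range r) V := by
      refine Finset.disjoint_left.mpr fun i hi1 hi2 => ?_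
      have := (Finset.filter_subset _ _) hi2
      simp only [Finset.mem_Ico, Finset.mem_range] at hi1 this; omega
    have h := hclosure V hVt hVsmall (Finset.range r) hT1t hdisj
      (by rw [hβ1]; linarith)
    have hsplit : (Finset.Ico r t).filter (fun i => 1 / 5 - 2 * η < β i) = Q₂ ∪ Q₃ := by
      rw [hQ₂def, hQ₃def, ← Finset.filter_union,
        Finset.Ico_union_Ico_eq_Ico hrs.le hst.le]
    have hVsum : ∑ i ∈ V, β i = (1 - α₁) - (∑ i ∈ Q₂, β i + ∑ i ∈ Q₃, β i) := by
      have h1 := Finset.sum_filter_add_sum_filter_not (Finset.Ico r t)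
        (fun i => 1 / 5 - 2 * η < β i) β
      rw [hsplit, Finset.sum_union (Finset.disjoint_filter_filter hd23), hsum_rt] at h1
      rw [hVdef]; linarith
    rw [Finset.sum_union hdisj, hβ1, hVsum] at h
    linarith
  -- key inequality 3 : L₁ + L₃ > 3/5 - η
  have key3 : 3 / 5 - η < ∑ i ∈ Q₁, β i + ∑ i ∈ Q₃, β i := by
    set V := ((Finset.range r) ∪ (Finset.Ico s t)).filter
      (fun i => ¬ (1 / 5 - 2 * η < β i)) with hVdef
    have hVt : V ⊆ Finset.range t :=
      (Finset.filter_subset _ _).trans (Finset.union_subset hT1t hT3t)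
    have hVsmall : ∀ i ∈ V, β i ≤ 1 / 5 - 2 * η := fun i hi =>
      le_of_not_gt (Finset.mem_filter.mp hi).2
    have hdisj : Disjoint (Finset.Ico r s) V := by
      refine Finset.disjoint_left.mpr fun i hi1 hi2 => ?_
      have := (Finset.filter_subset _ _) hi2
      simp only [Finset.mem_Ico, Finset.mem_union, Finset.mem_range] at hi1 this; omega
    have h := hclosure V hVt hVsmall (Finset.Ico r s) hT2t hdisj
      (by rw [hβ2]; linarith)
    have hsplit : ((Finset.range r) ∪ (Finset.Ico s t)).filter
        (fun i => 1 / 5 - 2 * η < β i) = Q₁ ∪ Q₃ := by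
      rw [hQ₁def, hQ₃def, ← Finset.filter_union]
    have hVsum : ∑ i ∈ V, β i =
        (α₁ + (1 - α₁ - α₂)) - (∑ i ∈ Q₁, β i + ∑ i ∈ Q₃, β i) := by
      have h1 := Finset.sum_filter_add_sum_filter_not
        ((Finset.range r) ∪ (Finset.Ico s t)) (fun i => 1 / 5 - 2 * η < β i) β
      rw [hsplit, Finset.sum_union (Finset.disjoint_filter_filter hd13),
        Finset.sum_union hd13, hβ1, hβ3] at h1
      rw [hVdef]; linarith
    rw [Finset.sum_union hdisj, hβ2, hVsum] at h
    linarith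
  -- nonemptiness of the Qᵢ
  have hQ₁ne : Q₁.Nonempty := by
    rw [Finset.nonempty_iff_ne_empty]
    intro h
    rw [h, Finset.sum_empty] at key1
    linarith
  have hQ₂ne : Q₂.Nonempty := by
    rw [Finset.nonempty_iff_ne_empty]
    intro h
    rw [h, Finset.sum_empty] at key1
    linarith
  have hQ₃ne : Q₃.Nonempty := by
    rw [Finset.nonempty_iff_ne_empty]
    intro h
    rw [h, Finset.sum_empty] at key2
    linarith
  -- Q₂ has exactly one element
  have hQ₂card : Q₂.card ≤ 1 := by
    by_contra h
    push_neg at h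
    obtain ⟨i, hi, j, hj, hij⟩ := Finset.one_lt_card.mp h
    have hsub2 : ({i, j} : Finset ℕ) ⊆ Finset.Ico r s := by
      intro x hx
      simp only [Finset.mem_insert, Finset.mem_singleton] at hx
      rcases hx with rfl | rfl
      · exact hQ₂T hi
      · exact hQ₂T hj
    have hle : ∑ x ∈ ({i, j} : Finset ℕ), β x ≤ ∑ x ∈ Finset.Ico r s, β x := by
      refine Finset.sum_le_sum_of_subset_of_nonneg hsub2 fun x hx _ => ?_
      exact (hβpos x (Finset.mem_range.mp (hT2t hx))).le
    rw [Finset.sum_pair hij, hβ2] at hle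
    have hbi := (Finset.mem_filter.mp hi).2
    have hbj := (Finset.mem_filter.mp hj).2
    linarith
  -- union cardinality
  have hdQ12 : Disjoint Q₁ Q₂ := Finset.disjoint_filter_filter hd12
  have hdQ13 : Disjoint Q₁ Q₃ := Finset.disjoint_filter_filter hd13
  have hdQ23 : Disjoint Q₂ Q₃ := Finset.disjoint_filter_filter hd23
  have hdU3 : Disjoint (Q₁ ∪ Q₂) Q₃ := Finset.disjoint_union_left.mpr ⟨hdQ13, hdQ23⟩
  have hcardU : (Q₁ ∪ Q₂ ∪ Q₃).card = Q₁.card + Q₂.card + Q₃.card := by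
    rw [Finset.card_union_of_disjoint hdU3, Finset.card_union_of_disjoint hdQ12]
  have hUt : Q₁ ∪ Q₂ ∪ Q₃ ⊆ Finset.range t :=
    Finset.union_subset (Finset.union_subset (hQ₁T.trans hT1t) (hQ₂T.trans hT2t))
      (hQ₃T.trans hT3t)
  have hUbig : ∀ i ∈ Q₁ ∪ Q₂ ∪ Q₃, 1 / 5 - 2 * η < β i := by
    intro i hi
    simp only [Finset.mem_union] at hi
    rcases hi with (hi | hi) | hi
    · exact (Finset.mem_filter.mp hi).2
    · exact (Finset.mem_filter.mp hi).2
    · exact (Finset.mem_filter.mp hi).2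
  -- from ≥ k+1 large elements, γ k is large
  have hbigγ : ∀ S : Finset ℕ, S ⊆ Finset.range t →
      (∀ i ∈ S, 1 / 5 - 2 * η < β i) →
      ∀ k : ℕ, k + 1 ≤ S.card → k < t ∧ 1 / 5 - 2 * η < γ k := by
    intro S hS hSbig k hk
    have hle : S.val.map β ≤ (Finset.range t).val.map β :=
      Multiset.map_le_map (Finset.val_le_iff.mpr hS)
    rw [← hperm] at hle
    obtain ⟨v, hv, hveq⟩ := exists_finset_map_eq γ _ _ hle
    have hcard : v.card = S.card := by
      have h := congrArg Multiset.card hveq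
      simpa using h
    have hex : ∃ j ∈ v, k ≤ j := by
      by_contra hno
      push_neg at hno
      have hsub : v ⊆ Finset.range k := fun j hj => Finset.mem_range.mpr (hno j hj)
      have := Finset.card_le_card hsub
      rw [Finset.card_range, hcard] at this
      omega
    obtain ⟨j, hjv, hjk⟩ := hex
    have hjt : j < t := Finset.mem_range.mp (hv hjv)
    have hγj : 1 / 5 - 2 * η < γ j := by
      have hmem : γ j ∈ v.val.map γ := Multiset.mem_map_of_mem γ (Finset.mem_val.mpr hjv)
      rw [hveq] at hmem
      obtain ⟨i, hiS, hieq⟩ := Multiset.mem_map.mp hmem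
      rw [← hieq]
      exact hSbig i (Finset.mem_val.mp hiS)
    exact ⟨lt_of_le_of_lt hjk hjt, lt_of_lt_of_le hγj (hγmono k j hjk hjt)⟩
  -- γ 2 is large
  obtain ⟨h2t, hγ2w⟩ := hbigγ _ hUt hUbig 2 (by
    rw [hcardU]
    have := hQ₁ne.card_pos; have := hQ₂ne.card_pos; have := hQ₃ne.card_pos
    omega)
  -- hence condition (c) gives γ 1 + γ 2 < 2/5 + η
  have hγ12 : γ 1 + γ 2 < 2 / 5 + η := by
    rcases hc with h | h
    · linarith
    · exact h
  -- bound for the sum of two distinct β's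
  have hpair : ∀ i j, i < t → j < t → i ≠ j → β i + β j ≤ γ 0 + γ 1 := by
    intro i j hi hj hij
    have hSsub : ({i, j} : Finset ℕ) ⊆ Finset.range t := by
      intro x hx
      simp only [Finset.mem_insert, Finset.mem_singleton] at hx
      rcases hx with rfl | rfl
      · exact Finset.mem_range.mpr hi
      · exact Finset.mem_range.mpr hj
    have hle : ({i, j} : Finset ℕ).val.map β ≤ (Finset.range t).val.map β :=
      Multiset.map_le_map (Finset.val_le_iff.mpr hSsub)
    rw [← hperm] at hle
    obtain ⟨v, hv, hveq⟩ := exists_finset_map_eq γ _ _ hle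
    have hcard : v.card = 2 := by
      have h : v.card = ({i, j} : Finset ℕ).card := by
        have h0 := congrArg Multiset.card hveq
        rw [Multiset.card_map, Multiset.card_map] at h0; exact h0
      rw [h, Finset.card_pair hij]
    obtain ⟨p, q, hpq, rfl⟩ := Finset.card_eq_two.mp hcard
    have hsum : γ p + γ q = β i + β j := by
      have h1 : ∑ x ∈ ({p, q} : Finset ℕ), γ x = ∑ x ∈ ({i, j} : Finset ℕ), β x := by
        show (({p, q} : Finset ℕ).val.map γ).sum = (({i, j} : Finset ℕ).val.map β).sum
        rw [hveq]
      rwa [Finset.sum_pair hpq, Finset.sum_pair hij] at h1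
    have hpt : p < t := Finset.mem_range.mp (hv (by simp))
    have hqt : q < t := Finset.mem_range.mp (hv (by simp))
    rcases lt_or_gt_of_ne hpq with h | h
    · have h1 : γ p ≤ γ 0 := hγmono 0 p (Nat.zero_le _) hpt
      have h2 : γ q ≤ γ 1 := hγmono 1 q (by omega) hqt
      linarith
    · have h1 : γ q ≤ γ 0 := hγmono 0 q (Nat.zero_le _) hqt
      have h2 : γ p ≤ γ 1 := hγmono 1 p (by omega) hpt
      linarith
  have hpairB : ∀ i j, i < t → j < t → i ≠ j → β i + β j < 3 / 5 - η := by
    intro i j hi hj hij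
    have := hpair i j hi hj hij
    linarith
  -- Q₂ = {i₂}
  obtain ⟨i₂, hQ₂eq⟩ := Finset.card_eq_one.mp (le_antisymm hQ₂card hQ₂ne.card_pos)
  have hi₂mem : i₂ ∈ Q₂ := by rw [hQ₂eq]; exact Finset.mem_singleton_self i₂
  have hL₂val : ∑ i ∈ Q₂, β i = β i₂ := by rw [hQ₂eq, Finset.sum_singleton]
  have hi₂t : i₂ < t := Finset.mem_range.mp (hT2t (hQ₂T hi₂mem))
  -- Q₁ has at least 2 elements
  have hQ₁card : 2 ≤ Q₁.card := by
    by_contra h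
    push_neg at h
    obtain ⟨i₁, hQ₁eq⟩ := Finset.card_eq_one.mp
      (le_antisymm (by omega) hQ₁ne.card_pos)
    have hi₁mem : i₁ ∈ Q₁ := by rw [hQ₁eq]; exact Finset.mem_singleton_self i₁
    have hi₁t : i₁ < t := Finset.mem_range.mp (hT1t (hQ₁T hi₁mem))
    have hne : i₁ ≠ i₂ := by
      have h1 := Finset.mem_range.mp (hQ₁T hi₁mem)
      have h2 := (Finset.mem_Ico.mp (hQ₂T hi₂mem)).1
      omega
    have := hpairB i₁ i₂ hi₁t hi₂t hne
    rw [hQ₁eq, Finset.sum_singleton, hL₂val] at key1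
    linarith
  -- Q₃ has at least 2 elements
  have hQ₃card : 2 ≤ Q₃.card := by
    by_contra h
    push_neg at h
    obtain ⟨i₃, hQ₃eq⟩ := Finset.card_eq_one.mp
      (le_antisymm (by omega) hQ₃ne.card_pos)
    have hi₃mem : i₃ ∈ Q₃ := by rw [hQ₃eq]; exact Finset.mem_singleton_self i₃
    have hi₃t : i₃ < t := Finset.mem_range.mp (hT3t (hQ₃T hi₃mem))
    have hne : i₂ ≠ i₃ := by
      have h1 := (Finset.mem_Ico.mp (hQ₂T hi₂mem)).2
      have h2 := (Finset.mem_Ico.mp (hQ₃T hi₃mem)).1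
      omega
    have := hpairB i₂ i₃ hi₂t hi₃t hne
    rw [hQ₃eq, Finset.sum_singleton, hL₂val] at key2
    linarith
  -- γ 4 is large
  obtain ⟨h4t, hγ4w⟩ := hbigγ _ hUt hUbig 4 (by
    rw [hcardU]
    have := hQ₂ne.card_pos
    omega)
  -- γ 2 + γ 3 + γ 4 > 3/5 - η, hence γ 2 > (3/5 - η)/3
  have hγ2B : (3 / 5 - η) / 3 < γ 2 := by
    have hsub234 : ({2, 3, 4} : Finset ℕ) ⊆ Finset.range t := by
      intro x hx
      simp only [Finset.mem_insert, Finset.mem_singleton] at hx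
      rcases hx with rfl | rfl | rfl <;> (exact Finset.mem_range.mpr (by omega))
    have hsum234 : ∑ x ∈ ({2, 3, 4} : Finset ℕ), γ x = γ 2 + γ 3 + γ 4 := by
      rw [show ({2, 3, 4} : Finset ℕ) = insert 2 (insert 3 {4}) from rfl,
        Finset.sum_insert (by decide), Finset.sum_insert (by decide),
        Finset.sum_singleton]
      ring
    have hγ3w : 1 / 5 - 2 * η < γ 3 := lt_of_lt_of_le hγ4w (hγmono 3 4 (by omega) h4t)
    have hnotI := hb _ hsub234
    rw [hsum234] at hnotI
    have hge : 2 / 5 + η ≤ γ 2 + γ 3 + γ 4 := by linarith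
    have hgt : 3 / 5 - η < γ 2 + γ 3 + γ 4 := by
      rcases lt_or_ge (3 / 5 - η) (γ 2 + γ 3 + γ 4) with h | h
      · exact h
      · exact absurd (Set.mem_Icc.mpr ⟨hge, h⟩) hnotI
    have h32 : γ 3 ≤ γ 2 := hγmono 2 3 (by omega) (by omega)
    have h42 : γ 4 ≤ γ 2 := hγmono 2 4 (by omega) h4t
    linarith
  -- counting transfer between β and γ
  have hcount : ∀ (p : ℝ → Prop) (_ : DecidablePred p),
      ((Finset.range t).filter (fun i => p (β i))).card =
      ((Finset.range t).filter (fun i => p (γ i))).card := by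
    intro p hp
    have h1 : Multiset.countP p ((Finset.range t).val.map β) =
        Multiset.countP p ((Finset.range t).val.map γ) := by rw [hperm]
    rw [Multiset.countP_map, Multiset.countP_map] at h1
    simpa [Finset.card, Finset.filter_val, Multiset.countP_eq_card_filter] using h1
  -- at least 3 indices with β i > (3/5 - η)/3
  have hF0 : 3 ≤ ((Finset.range t).filter (fun i => (3 / 5 - η) / 3 < β i)).card := by
    rw [hcount (fun x => (3 / 5 - η) / 3 < x) (fun x => inferInstance)]
    have hsub : ({0, 1, 2} : Finset ℕ) ⊆
        (Finset.range t).filter (fun i => (3 / 5 - η) / 3 < γ i) := by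
      intro x hx
      simp only [Finset.mem_insert, Finset.mem_singleton] at hx
      have h0 : γ 2 ≤ γ 0 := hγmono 0 2 (by omega) h2t
      have h1 : γ 2 ≤ γ 1 := hγmono 1 2 (by omega) h2t
      rcases hx with rfl | rfl | rfl <;>
        (refine Finset.mem_filter.mpr ⟨Finset.mem_range.mpr (by omega), by linarith⟩)
    have := Finset.card_le_card hsub
    simpa using this
  -- at most 1 index with β i > γ 1
  have htop : ((Finset.range t).filter (fun i => γ 1 < β i)).card ≤ 1 := by
    rw [hcount (fun x => γ 1 < x) (fun x => inferInstance)]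
    have hsub : (Finset.range t).filter (fun i => γ 1 < γ i) ⊆ {0} := by
      intro j hj
      obtain ⟨hjt, hjγ⟩ := Finset.mem_filter.mp hj
      have hjt' := Finset.mem_range.mp hjt
      rcases Nat.eq_zero_or_pos j with rfl | hpos
      · exact Finset.mem_singleton_self 0
      · exact absurd (hγmono 1 j hpos hjt') (by linarith)
    have := Finset.card_le_card hsub
    simpa using this
  -- at most 1 index in the middle block with β i > (3/5 - η)/3
  have hT2f : ((Finset.Ico r s).filter (fun i => (3 / 5 - η) / 3 < β i)).card ≤ 1 := by
    by_contra h
    push_neg at h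
    obtain ⟨i, hi, j, hj, hij⟩ := Finset.one_lt_card.mp h
    have hsub2 : ({i, j} : Finset ℕ) ⊆ Finset.Ico r s := by
      intro x hx
      simp only [Finset.mem_insert, Finset.mem_singleton] at hx
      rcases hx with rfl | rfl
      · exact Finset.filter_subset _ _ hi
      · exact Finset.filter_subset _ _ hj
    have hle : ∑ x ∈ ({i, j} : Finset ℕ), β x ≤ ∑ x ∈ Finset.Ico r s, β x := by
      refine Finset.sum_le_sum_of_subset_of_nonneg hsub2 fun x hx _ => ?_
      exact (hβpos x (Finset.mem_range.mp (hT2t hx))).le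
    rw [Finset.sum_pair hij, hβ2] at hle
    have hbi := (Finset.mem_filter.mp hi).2
    have hbj := (Finset.mem_filter.mp hj).2
    linarith
  -- find a suitable index p outside the middle block
  have hex : ∃ p ∈ (Finset.range t).filter (fun i => (3 / 5 - η) / 3 < β i),
      p ∉ (Finset.range t).filter (fun i => γ 1 < β i) ∧ p ∉ Finset.Ico r s := by
    by_contra h
    push_neg at h
    have hsub : (Finset.range t).filter (fun i => (3 / 5 - η) / 3 < β i) ⊆
        (Finset.range t).filter (fun i => γ 1 < β i) ∪
        (Finset.Ico r s).filter (fun i => (3 / 5 - η) / 3 < β i) := by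
      intro i hi
      by_cases hX : i ∈ (Finset.range t).filter (fun i => γ 1 < β i)
      · exact Finset.mem_union_left _ hX
      · refine Finset.mem_union_right _ (Finset.mem_filter.mpr
          ⟨h i hi hX, (Finset.mem_filter.mp hi).2⟩)
    have h1 := Finset.card_le_card hsub
    have h2 := Finset.card_union_le ((Finset.range t).filter (fun i => γ 1 < β i))
      ((Finset.Ico r s).filter (fun i => (3 / 5 - η) / 3 < β i))
    omega
  obtain ⟨p, hpF, hpX, hpT2⟩ := hex
  obtain ⟨hpt, hpβ⟩ := Finset.mem_filter.mp hpF
  have hpt' : p < t := Finset.mem_range.mp hpt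
  have hpγ1 : β p ≤ γ 1 := by
    by_contra h
    exact hpX (Finset.mem_filter.mpr ⟨hpt, lt_of_not_ge h⟩)
  -- final computation
  have hfin : ∑ i ∈ insert p (Finset.Ico r s), β i = β p + α₂ := by
    rw [Finset.sum_insert hpT2, hβ2]
  have hsubfin : insert p (Finset.Ico r s) ⊆ Finset.range t :=
    Finset.insert_subset hpt hT2t
  have hltB : ∑ i ∈ insert p (Finset.Ico r s), β i < 3 / 5 - η := by
    rw [hfin]
    linarith
  have hltA := hescape _ hsubfin hltB
  rw [hfin] at hltA
  linarith
end
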